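/- Let w : ℤ → ℝ be supported in {-n, ..., 0} and let p(t) = Σ_{ν=0}^{n} t^ν · w(-ν). Suppose t = 1 is a root of p of order exactly m, i.e., p^(j)(1) = 0 for j = 0, ..., m-1 and c := p^(m)(1) ≠ 0. Then for every integer x ≥ 1, Σ_{k=x}^{x+n} k^m · w(x-k) = c. -/

import Mathlib

/-!
Reindexing `k = x + ν`, the sum becomes `∑ ν, (x + ν)^m w(-ν)`, while `p^(j)(1)` is the
falling-factorial moment `∑ ν, ν(ν-1)⋯(ν-j+1) w(-ν)`. As a polynomial in `ν`, `(x + ν)^m` is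
the falling factorial of order `m` plus a combination of lower ones, whose moments vanish by
hypothesis; so only `p^(m)(1)` remains.
-/

open Finset

theorem Nat.mul_descFactorial (n k : ℕ) :
    n * n.descFactorial k = n.descFactorial (k + 1) + k * n.descFactorial k := by
  rw [Nat.descFactorial_succ]
  rcases le_or_gt k n with h | h
  · rw [← add_mul, Nat.sub_add_cancel h]
  · simp [Nat.descFactorial_eq_zero_iff_lt.2 h]

section FallingMoments

variable {R : Type*} [CommRing R] (s : Finset ℕ)

theorem sum_descFactorial_mul_natCast_mul (c : ℕ → R) (j : ℕ) :
    ∑ ν ∈ s, (ν.descFactorial j : R) * (ν * c ν) =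
      ∑ ν ∈ s, (ν.descFactorial (j + 1) : R) * c ν +
        j * ∑ ν ∈ s, (ν.descFactorial j : R) * c ν := by
  rw [mul_sum, ← sum_add_distrib]
  refine sum_congr rfl fun ν _ => ?_
  have h := congrArg (Nat.cast : ℕ → R) (Nat.mul_descFactorial ν j)
  push_cast at h
  linear_combination c ν * h

theorem sum_add_pow_mul_eq_sum_descFactorial_mul (x : R) (m : ℕ) (c : ℕ → R)
    (hc : ∀ j < m, ∑ ν ∈ s, (ν.descFactorial j : R) * c ν = 0) :
    ∑ ν ∈ s, (x + ν) ^ m * c ν = ∑ ν ∈ s, (ν.descFactorial m : R) * c ν := by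
  induction m generalizing c with
  | zero => simp
  | succ m ih =>
    have hm : ∑ ν ∈ s, (x + ν) ^ m * c ν = 0 := by
      rw [ih c fun j hj => hc j (by omega)]
      exact hc m m.lt_succ_self
    have hνc : ∀ j < m, ∑ ν ∈ s, (ν.descFactorial j : R) * (ν * c ν) = 0 := fun j hj => by
      rw [sum_descFactorial_mul_natCast_mul, hc (j + 1) (by omega), hc j (by omega)]
      ring
    calc ∑ ν ∈ s, (x + ν) ^ (m + 1) * c ν
        = x * ∑ ν ∈ s, (x + ν) ^ m * c ν + ∑ ν ∈ s, (x + ν) ^ m * (ν * c ν) := by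
          rw [mul_sum, ← sum_add_distrib]
          exact sum_congr rfl fun ν _ => by ring
      _ = ∑ ν ∈ s, (ν.descFactorial m : R) * (ν * c ν) := by
          rw [hm, ih _ hνc, mul_zero, zero_add]
      _ = ∑ ν ∈ s, (ν.descFactorial (m + 1) : R) * c ν := by
          rw [sum_descFactorial_mul_natCast_mul, hc m m.lt_succ_self, mul_zero, add_zero]

end FallingMoments

theorem iteratedDeriv_sum_pow_mul {𝕜 : Type*} [NontriviallyNormedField 𝕜] (s : Finset ℕ)
    (c : ℕ → 𝕜) (j : ℕ) (x : 𝕜) :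
    iteratedDeriv j (fun t => ∑ ν ∈ s, t ^ ν * c ν) x =
      ∑ ν ∈ s, (ν.descFactorial j : 𝕜) * x ^ (ν - j) * c ν := by
  rw [iteratedDeriv_fun_sum fun ν _ => by fun_prop]
  simp only [iteratedDeriv_mul_const_field, iteratedDeriv_pow]

theorem sum_Icc_add_natCast {M : Type*} [AddCommMonoid M] (f : ℤ → M) (x : ℤ) (n : ℕ) :
    ∑ k ∈ Icc x (x + n), f k = ∑ ν ∈ range (n + 1), f (x + ν) := by
  refine (sum_nbij' (fun ν : ℕ => x + ν) (fun k => (k - x).toNat) ?_ ?_ ?_ ?_ ?_).symm <;>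
    grind

theorem stmt_1_general (n m : ℕ) (w : ℤ → ℝ) (p : ℝ → ℝ)
    (hp : p = fun t : ℝ => ∑ ν ∈ Finset.range (n + 1), t ^ ν * w (-(ν : ℤ)))
    (hroot : ∀ j : ℕ, j < m → iteratedDeriv j p 1 = 0) :
    ∀ x : ℤ, 1 ≤ x →
      ∑ k ∈ Finset.Icc x (x + (n : ℤ)), (k : ℝ) ^ m * w (x - k) = iteratedDeriv m p 1 := by
  have hderiv (j : ℕ) :
      iteratedDeriv j p 1 = ∑ ν ∈ range (n + 1), (ν.descFactorial j : ℝ) * w (-ν) := by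
    simp only [hp, iteratedDeriv_sum_pow_mul, one_pow, mul_one]
  intro x _
  rw [sum_Icc_add_natCast, hderiv]
  simp only [Int.cast_add, Int.cast_natCast, sub_add_cancel_left]
  exact sum_add_pow_mul_eq_sum_descFactorial_mul _ _ _ _ fun j hj =>
    (hderiv j).symm.trans (hroot j hj)

/-- If the accompanying polynomial of `w` (supported in `{-n,…,0}`) has a root of order
exactly `m` at `t = 1` with `c = p^(m)(1) ≠ 0`, then
`∑_{k=x}^{x+n} k^m w(x-k) = c` for every integer `x ≥ 1`. -/
theorem stmt_1 (n m : ℕ) (w : ℤ → ℝ)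
    (hsupp : ∀ x : ℤ, w x ≠ 0 → -(n : ℤ) ≤ x ∧ x ≤ 0)
    (p : ℝ → ℝ)
    (hp : p = fun t : ℝ => ∑ ν ∈ Finset.range (n + 1), t ^ ν * w (-(ν : ℤ)))
    (hroot : ∀ j : ℕ, j < m → iteratedDeriv j p 1 = 0)
    (hc : iteratedDeriv m p 1 ≠ 0) :
    ∀ x : ℤ, 1 ≤ x →
      ∑ k ∈ Finset.Icc x (x + (n : ℤ)), (k : ℝ) ^ m * w (x - k) = iteratedDeriv m p 1 :=
  stmt_1_general n m w p hp hroot
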